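/- Let G be a simple graph on n vertices with maximum subgraph spectral density t = t(G). If k ≥ √(8n)/(1−t), then BC_k(G) holds. Equivalently, any k for which BC_k(G) fails satisfies m/n < k < √(8n)/(1−t), where m is the number of edges of G. -/

import Mathlib

open Finset

namespace Brouwer

variable {V : Type*}

/-- The sum of the `k` largest values of `f` on a finite type, expressed as the
supremum over all `k`-element subsets of the sum of `f` over the subset. -/
noncomputable def sumKLargest [Fintype V] (f : V → ℝ) (k : ℕ) : ℝ :=
  sSup { x : ℝ | ∃ T : Finset V, T.card = k ∧ ∑ i ∈ T, f i = x }

/-- The Laplacian matrix of a finite simple graph is Hermitian (real symmetric). -/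
theorem lapMatrix_isHermitian [Fintype V] [DecidableEq V] (G : SimpleGraph V)
    [DecidableRel G.Adj] : (G.lapMatrix ℝ).IsHermitian := by
  rw [Matrix.IsHermitian, Matrix.conjTranspose_eq_transpose_of_trivial]
  exact G.isSymm_lapMatrix (R := ℝ)

/-- The adjacency matrix of a finite simple graph is Hermitian (real symmetric). -/
theorem adjMatrix_isHermitian [Fintype V] [DecidableEq V] (G : SimpleGraph V)
    [DecidableRel G.Adj] : (G.adjMatrix ℝ).IsHermitian := by
  rw [Matrix.IsHermitian, Matrix.conjTranspose_eq_transpose_of_trivial]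
  exact G.isSymm_adjMatrix

/-- The (multiset of) eigenvalues of the Laplacian matrix of `G`, indexed by vertices. -/
noncomputable def lapEig [Fintype V] [DecidableEq V] (G : SimpleGraph V) : V → ℝ := by
  classical exact (lapMatrix_isHermitian G).eigenvalues

/-- The (multiset of) eigenvalues of the adjacency matrix of `G`, indexed by vertices. -/
noncomputable def adjEig [Fintype V] [DecidableEq V] (G : SimpleGraph V) : V → ℝ := by
  classical exact (adjMatrix_isHermitian G).eigenvalues

/-- `sLap G k` is `s_k(G)`, the sum of the `k` largest Laplacian eigenvalues of `G`. -/
noncomputable def sLap [Fintype V] [DecidableEq V] (G : SimpleGraph V) (k : ℕ) : ℝ :=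
  sumKLargest (lapEig G) k

/-- The number of edges of `G`. -/
noncomputable def numEdges [Fintype V] (G : SimpleGraph V) : ℕ := by
  classical exact G.edgeFinset.card

/-- `BC G k`: Brouwer's conjectured inequality `s_k(G) ≤ m + (k+1 choose 2)`. -/
def BC [Fintype V] [DecidableEq V] (G : SimpleGraph V) (k : ℕ) : Prop :=
  sLap G k ≤ numEdges G + (k + 1).choose 2

/-- Number of edges of `G` with both endpoints in `S`. -/
noncomputable def edgesWithin [Fintype V] [DecidableEq V] (G : SimpleGraph V)
    (S : Finset V) : ℕ := by
  classical exact (G.edgeFinset.filter (fun e => ∀ v ∈ e, v ∈ S)).card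

/-- The adjacency spectral radius of `G`, i.e. the largest adjacency eigenvalue. -/
noncomputable def specRad [Fintype V] [DecidableEq V] (G : SimpleGraph V) : ℝ :=
  sumKLargest (adjEig G) 1

/-- The maximum subgraph spectral density `t(G)`:
the supremum of `ρ(G[S])/|S|` over nonempty vertex subsets `S`. -/
noncomputable def maxDensity [Fintype V] [DecidableEq V] (G : SimpleGraph V) : ℝ :=
  sSup { x : ℝ | ∃ S : Finset V, S.Nonempty ∧
    x = specRad (G.induce (↑S : Set V)) / (S.card : ℝ) }

/-- Edge-edit distance between two graphs on the same vertex set. -/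
noncomputable def editDistance [Fintype V] (G H : SimpleGraph V) : ℕ := by
  classical exact (symmDiff G.edgeFinset H.edgeFinset).card

/-- A split graph: the vertex set partitions into a clique and an independent set. -/
def IsSplit (G : SimpleGraph V) : Prop :=
  ∃ C : Set V, G.IsClique C ∧ Gᶜ.IsClique Cᶜ

/-- The splittance of `G`: the least number of edge edits needed to reach a split graph. -/
noncomputable def splittance [Fintype V] (G : SimpleGraph V) : ℕ :=
  sInf { d : ℕ | ∃ H : SimpleGraph V, IsSplit H ∧ editDistance G H = d }

/-- The join `G + K₁` of `G` with one new vertex adjacent to every vertex of `G`. -/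
def joinOne (G : SimpleGraph V) : SimpleGraph (Option V) where
  Adj x y := x ≠ y ∧ ∀ a, x = some a → ∀ b, y = some b → G.Adj a b
  symm := ⟨by
    rintro x y ⟨hxy, h⟩
    exact ⟨hxy.symm, fun a ha b hb => (h b hb a ha).symm⟩⟩
  loopless := ⟨by rintro x ⟨hxx, -⟩; exact hxx rfl⟩

/-!
Let `T` index `k` orthonormal Laplacian eigenvectors `v i` and put `z u = ∑ i ∈ T, (v i u)²`,
so that `0 ≤ z ≤ 1` and `∑ z = k`. Writing `L = D - A`,
`∑ i ∈ T, λ i = ∑ u, deg u * z u - ∑ i ∈ T, v iᵀ A v i`.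
Pairing each edge with `z u + z w ≤ 1 + z u * z w` bounds the first sum by `m + zᵀ A z / 2`,
and a Motzkin–Straus argument gives `zᵀ A z ≤ t (∑ z)² = t k²`: shifting weight across
non-edges does not decrease `zᵀ A z`, and once the support is a clique `S` one has
`(|S| - 1) / |S| ≤ ρ(G[S]) / |S| ≤ t`. By Cauchy–Schwarz the second sum is at most
`√k ‖A‖_F = √(2 m k)`. So `s_k ≤ m + t k² / 2 + √(2 m k)`.
If `m < k n` and `k (1 - t) ≥ √(8 n)`, then `√(2 m k) ≤ (1 - t) k² / 2`, whence
`s_k ≤ m + k² / 2`; if `m ≥ k n`, then already `s_k ≤ k n ≤ m`, as every Laplacian eigenvalue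
is at most `n`.
-/

end Brouwer

open Finset Matrix SimpleGraph

namespace Matrix

section Orthogonal

variable {n : Type*} [Fintype n] [DecidableEq n] {U : Matrix n n ℝ}

theorem sum_sq_col_eq_one (hU : U ∈ orthogonalGroup n ℝ) (i : n) :
    ∑ u, U u i ^ 2 = 1 := by
  simpa [mul_apply, sq] using congrFun (congrFun ((mem_orthogonalGroup_iff' n ℝ).mp hU) i) i

theorem sum_sq_row_eq_one (hU : U ∈ orthogonalGroup n ℝ) (u : n) :
    ∑ i, U u i ^ 2 = 1 := by
  simpa [mul_apply, sq] using congrFun (congrFun ((mem_orthogonalGroup_iff n ℝ).mp hU) u) u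

theorem sum_sq_mul_of_mem_orthogonalGroup (N : Matrix n n ℝ) (hU : U ∈ orthogonalGroup n ℝ) :
    ∑ i, ∑ u, (N * U) u i ^ 2 = ∑ u, ∑ w, N u w ^ 2 := by
  have h : (N * U) * (N * U)ᵀ = N * Nᵀ := by
    rw [transpose_mul, Matrix.mul_assoc, ← Matrix.mul_assoc U, (mem_orthogonalGroup_iff n ℝ).mp hU,
      Matrix.one_mul]
  rw [Finset.sum_comm]
  simpa [trace, mul_apply, sq, mul_comm] using congrArg trace h

theorem abs_sum_dotProduct_mulVec_le (N : Matrix n n ℝ) (hU : U ∈ orthogonalGroup n ℝ)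
    (T : Finset n) :
    |∑ i ∈ T, Uᵀ i ⬝ᵥ N *ᵥ Uᵀ i| ≤ √(#T * ∑ u, ∑ w, N u w ^ 2) := by
  have hq : ∀ i, (Uᵀ i ⬝ᵥ N *ᵥ Uᵀ i) ^ 2 ≤ ∑ u, (N * U) u i ^ 2 := fun i => by
    simpa [dotProduct, mulVec, mul_apply, sum_sq_col_eq_one hU] using
      Finset.sum_mul_sq_le_sq_mul_sq univ (fun u => U u i) (N *ᵥ Uᵀ i)
  rw [← Real.sqrt_sq_eq_abs, ← sum_sq_mul_of_mem_orthogonalGroup N hU]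
  gcongr
  calc (∑ i ∈ T, Uᵀ i ⬝ᵥ N *ᵥ Uᵀ i) ^ 2 ≤ #T * ∑ i ∈ T, (Uᵀ i ⬝ᵥ N *ᵥ Uᵀ i) ^ 2 :=
        sq_sum_le_card_mul_sum_sq
    _ ≤ #T * ∑ i, ∑ u, (N * U) u i ^ 2 := by
        gcongr
        exact (Finset.sum_le_sum fun i _ => hq i).trans
          (Finset.sum_le_sum_of_subset_of_nonneg (subset_univ T) fun _ _ _ => by positivity)

end Orthogonal

section Hermitian

variable {n : Type*} [Fintype n] [DecidableEq n] {A : Matrix n n ℝ}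

theorem IsHermitian.eigenvectorUnitary_mem_orthogonalGroup (hA : A.IsHermitian) :
    (hA.eigenvectorUnitary : Matrix n n ℝ) ∈ orthogonalGroup n ℝ :=
  hA.eigenvectorUnitary.2

theorem IsHermitian.eigenvalues_eq_dotProduct (hA : A.IsHermitian) (i : n) :
    hA.eigenvalues i = (hA.eigenvectorUnitary : Matrix n n ℝ)ᵀ i ⬝ᵥ
      A *ᵥ (hA.eigenvectorUnitary : Matrix n n ℝ)ᵀ i := by
  simp [hA.eigenvalues_eq i]

theorem IsHermitian.eigenvalues_le_of_dotProduct_le (hA : A.IsHermitian) {B : ℝ}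
    (hB : ∀ x, x ⬝ᵥ A *ᵥ x ≤ B * ∑ u, x u ^ 2) (i : n) : hA.eigenvalues i ≤ B := by
  have h := hB ((hA.eigenvectorUnitary : Matrix n n ℝ)ᵀ i)
  simp only [transpose_apply, sum_sq_col_eq_one hA.eigenvectorUnitary_mem_orthogonalGroup,
    mul_one] at h
  rwa [hA.eigenvalues_eq_dotProduct]

end Hermitian

end Matrix

namespace Brouwer

variable {V : Type*}

section SumKLargest

variable [Fintype V]

theorem le_sumKLargest (f : V → ℝ) {T : Finset V} : ∑ i ∈ T, f i ≤ sumKLargest f #T :=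
  le_csSup ((Set.finite_range fun T : Finset V => ∑ i ∈ T, f i).subset
    (by rintro _ ⟨T, -, rfl⟩; exact ⟨T, rfl⟩)).bddAbove ⟨T, rfl, rfl⟩

theorem sumKLargest_le {f : V → ℝ} {k : ℕ} {B : ℝ} (hB : 0 ≤ B)
    (h : ∀ T : Finset V, #T = k → ∑ i ∈ T, f i ≤ B) : sumKLargest f k ≤ B :=
  Real.sSup_le (by rintro _ ⟨T, hT, rfl⟩; exact h T hT) hB

end SumKLargest

section EdgeCount

variable [Fintype V] (G : SimpleGraph V) [DecidableRel G.Adj]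

theorem numEdges_eq_card_edgeFinset : numEdges G = #G.edgeFinset := by
  unfold numEdges; congr!

theorem sum_sum_ite_adj_eq_two_mul_numEdges :
    ∑ u, ∑ w, (if G.Adj u w then 1 else 0 : ℝ) = 2 * numEdges G := by
  rw [numEdges_eq_card_edgeFinset]
  calc ∑ u, ∑ w, (if G.Adj u w then 1 else 0 : ℝ) = ∑ u, (G.degree u : ℝ) :=
        Finset.sum_congr rfl fun u _ => (G.degree_eq_sum_if_adj u).symm
    _ = 2 * #G.edgeFinset := by exact_mod_cast G.sum_degrees_eq_twice_card_edges

theorem sum_degree_mul_le {z : V → ℝ} (hz1 : z ≤ 1) :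
    ∑ u, G.degree u * z u ≤ numEdges G + z ⬝ᵥ G.adjMatrix ℝ *ᵥ z / 2 := by
  have hdeg : ∑ u, G.degree u * z u = ∑ u, ∑ w, if G.Adj u w then z u else 0 := by
    simp only [G.degree_eq_sum_if_adj (R := ℝ), Finset.sum_mul, ite_mul, one_mul, zero_mul]
  have hswap : ∑ u, ∑ w, (if G.Adj u w then z u else 0) =
      ∑ u, ∑ w, if G.Adj u w then z w else 0 := by
    rw [Finset.sum_comm]; simp [G.adj_comm]
  have hpair : ∑ u, ∑ w, (if G.Adj u w then z u + z w else 0) ≤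
      ∑ u, ∑ w, if G.Adj u w then 1 + z u * z w else 0 := by
    gcongr with u _ w _
    split_ifs
    · nlinarith [mul_nonneg (sub_nonneg.mpr (show z u ≤ 1 from hz1 u))
        (sub_nonneg.mpr (show z w ≤ 1 from hz1 w))]
    · exact le_rfl
  simp only [ite_add_zero, Finset.sum_add_distrib, sum_sum_ite_adj_eq_two_mul_numEdges G] at hpair
  rw [G.dotProduct_mulVec_adjMatrix]
  linarith

theorem sum_sum_adjMatrix_sq_eq_two_mul_numEdges :
    ∑ u, ∑ w, G.adjMatrix ℝ u w ^ 2 = 2 * numEdges G := by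
  simp [← sum_sum_ite_adj_eq_two_mul_numEdges G, adjMatrix_apply, ite_pow]

end EdgeCount

section Graph

variable [Fintype V] [DecidableEq V] (G : SimpleGraph V) [DecidableRel G.Adj]

theorem adjEig_eq_eigenvalues : adjEig G = (adjMatrix_isHermitian G).eigenvalues := by
  unfold adjEig; congr!

theorem lapEig_eq_eigenvalues : lapEig G = (lapMatrix_isHermitian G).eigenvalues := by
  unfold lapEig; congr!

theorem dotProduct_adjMatrix_mulVec_le (x : V → ℝ) :
    x ⬝ᵥ G.adjMatrix ℝ *ᵥ x ≤ (∑ u, |x u|) ^ 2 - ∑ u, x u ^ 2 := by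
  have hdiag : ∑ u, x u ^ 2 = ∑ u, ∑ w, if u = w then x u * x w else 0 := by simp [sq]
  rw [G.dotProduct_mulVec_adjMatrix, le_sub_iff_add_le, sq, Finset.sum_mul_sum, hdiag,
    ← Finset.sum_add_distrib]
  refine Finset.sum_le_sum fun u _ => ?_
  rw [← Finset.sum_add_distrib]
  refine Finset.sum_le_sum fun w _ => ?_
  by_cases huw : u = w
  · subst huw; simp [abs_mul_abs_self]
  · rw [if_neg huw, add_zero, ← abs_mul]
    split_ifs
    exacts [le_abs_self _, abs_nonneg _]

theorem dotProduct_lapMatrix_mulVec_le (x : V → ℝ) :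
    x ⬝ᵥ G.lapMatrix ℝ *ᵥ x ≤ Fintype.card V * ∑ u, x u ^ 2 := by
  rw [← toLinearMap₂'_apply', G.lapMatrix_toLinearMap₂' ℝ]
  have hsq : ∑ u, ∑ w, (x u - x w) ^ 2 =
      2 * (Fintype.card V * ∑ u, x u ^ 2 - (∑ u, x u) ^ 2) := by
    simp only [sub_sq, Finset.sum_add_distrib, Finset.sum_sub_distrib, Finset.sum_const,
      Finset.card_univ, nsmul_eq_mul, ← Finset.mul_sum, ← Finset.sum_mul]
    ring
  calc (∑ u, ∑ w, if G.Adj u w then (x u - x w) ^ 2 else 0) / 2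
      ≤ (∑ u, ∑ w, (x u - x w) ^ 2) / 2 := by
        gcongr with u _ w _
        split_ifs
        exacts [le_rfl, sq_nonneg _]
    _ ≤ Fintype.card V * ∑ u, x u ^ 2 := by rw [hsq]; nlinarith [sq_nonneg (∑ u, x u)]

theorem adjEig_le_card_sub_one (i : V) : adjEig G i ≤ Fintype.card V - 1 := by
  rw [adjEig_eq_eigenvalues]
  refine (adjMatrix_isHermitian G).eigenvalues_le_of_dotProduct_le (fun x => ?_) i
  have hcs : (∑ u, |x u|) ^ 2 ≤ Fintype.card V * ∑ u, x u ^ 2 := by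
    simpa using sq_sum_le_card_mul_sum_sq (s := univ) (f := fun u => |x u|)
  linarith [dotProduct_adjMatrix_mulVec_le G x]

theorem specRad_le_card_sub_one [Nonempty V] : specRad G ≤ Fintype.card V - 1 :=
  sumKLargest_le (by simp [Nat.one_le_cast.mpr Fintype.card_pos]) fun T hT => by
    obtain ⟨i, rfl⟩ := card_eq_one.mp hT
    simpa using adjEig_le_card_sub_one G i

theorem le_specRad_of_isRegularOfDegree [Nonempty V] {d : ℕ} (hd : G.IsRegularOfDegree d) :
    (d : ℝ) ≤ specRad G := by
  have hvec : G.adjMatrix ℝ *ᵥ Function.const V 1 = (d : ℝ) • Function.const V 1 := by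
    ext v; simp [hd.degree_eq]
  have hd : Module.End.HasEigenvalue (toLin' (G.adjMatrix ℝ)) d :=
    Module.End.hasEigenvalue_of_hasEigenvector
      ⟨Module.End.mem_eigenspace_iff.mpr (by simpa using hvec), by simp⟩
  have hmem := hd.mem_spectrum
  rw [spectrum_toLin', (adjMatrix_isHermitian G).spectrum_real_eq_range_eigenvalues,
    ← adjEig_eq_eigenvalues] at hmem
  obtain ⟨i, hi⟩ := hmem
  simpa [hi, specRad] using le_sumKLargest (adjEig G) (T := {i})

end Graph

section Density

variable [Fintype V] [DecidableEq V] (G : SimpleGraph V)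

theorem finite_specRad_induce_div_card :
    {x : ℝ | ∃ S : Finset V, S.Nonempty ∧ x = specRad (G.induce (↑S : Set V)) / #S}.Finite :=
  (Set.finite_range fun S : Finset V => specRad (G.induce (↑S : Set V)) / #S).subset
    (by rintro _ ⟨S, -, rfl⟩; exact ⟨S, rfl⟩)

theorem specRad_induce_div_card_le_maxDensity {S : Finset V} (hS : S.Nonempty) :
    specRad (G.induce (↑S : Set V)) / #S ≤ maxDensity G :=
  le_csSup (finite_specRad_induce_div_card G).bddAbove ⟨S, hS, rfl⟩

theorem maxDensity_lt_one : maxDensity G < 1 := by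
  classical
  rcases Set.eq_empty_or_nonempty
    {x : ℝ | ∃ S : Finset V, S.Nonempty ∧ x = specRad (G.induce (↑S : Set V)) / #S} with h | h
  · rw [maxDensity, h, Real.sSup_empty]; exact one_pos
  rw [maxDensity, (finite_specRad_induce_div_card G).csSup_lt_iff h]
  rintro _ ⟨S, hS, rfl⟩
  have : Nonempty (↑S : Set V) := hS.to_subtype
  have hρ := specRad_le_card_sub_one (G.induce (↑S : Set V))
  rw [div_lt_one (by simpa using hS.card_pos)]
  simp only [SetLike.coe_sort_coe, Fintype.card_coe] at hρ
  linarith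

theorem card_sub_one_div_card_le_maxDensity {S : Finset V} (hS : S.Nonempty)
    (hclique : G.IsClique (↑S : Set V)) : (#S - 1 : ℝ) / #S ≤ maxDensity G := by
  classical
  have : Nonempty (↑S : Set V) := hS.to_subtype
  have hρ : (#S - 1 : ℝ) ≤ specRad (G.induce (↑S : Set V)) := by
    rw [induce_eq_top.mpr hclique]
    simpa [Nat.cast_sub (Nat.one_le_iff_ne_zero.mpr hS.card_ne_zero)] using
      le_specRad_of_isRegularOfDegree (⊤ : SimpleGraph (↑S : Set V)) IsRegularOfDegree.top
  exact (div_le_div_of_nonneg_right hρ (by positivity)).trans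
    (specRad_induce_div_card_le_maxDensity G hS)

end Density

section MotzkinStraus

variable [Fintype V] [DecidableEq V] (G : SimpleGraph V) [DecidableRel G.Adj]

theorem dotProduct_adjMatrix_mulVec_le_maxDensity_of_isClique {z : V → ℝ} (hz : 0 ≤ z)
    (hclique : G.IsClique (Function.support z)) :
    z ⬝ᵥ G.adjMatrix ℝ *ᵥ z ≤ maxDensity G * (∑ u, z u) ^ 2 := by
  classical
  set S := (Function.support z).toFinset
  rcases S.eq_empty_or_nonempty with hS | hS
  · obtain rfl : z = 0 := by simpa [S] using hS
    simp
  have hsum : ∑ u ∈ S, z u = ∑ u, z u :=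
    Finset.sum_subset (subset_univ S) fun u _ hu => by simpa [S] using hu
  have hsq : ∑ u ∈ S, z u ^ 2 ≤ ∑ u, z u ^ 2 :=
    Finset.sum_le_sum_of_subset_of_nonneg (subset_univ S) fun _ _ _ => sq_nonneg _
  have hcs : (∑ u, z u) ^ 2 ≤ #S * ∑ u, z u ^ 2 := by
    rw [← hsum]
    exact sq_sum_le_card_mul_sum_sq.trans (mul_le_mul_of_nonneg_left hsq (by positivity))
  have hquad := dotProduct_adjMatrix_mulVec_le G z
  simp only [abs_of_nonneg (hz _)] at hquad
  have hdens := card_sub_one_div_card_le_maxDensity G hS (by simpa [S] using hclique)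
  have hcard : (0 : ℝ) < #S := by exact_mod_cast hS.card_pos
  calc z ⬝ᵥ G.adjMatrix ℝ *ᵥ z ≤ (#S - 1 : ℝ) / #S * (∑ u, z u) ^ 2 := by
        rw [div_mul_eq_mul_div, le_div_iff₀ hcard]
        nlinarith
    _ ≤ maxDensity G * (∑ u, z u) ^ 2 := by gcongr

theorem dotProduct_adjMatrix_mulVec_le_of_not_adj (z : V → ℝ) {u w : V}
    (hadj : ¬ G.Adj u w) (hdir : (G.adjMatrix ℝ *ᵥ z) w ≤ (G.adjMatrix ℝ *ᵥ z) u) {c : ℝ}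
    (hc : 0 ≤ c) :
    z ⬝ᵥ G.adjMatrix ℝ *ᵥ z ≤ (z + c • (Pi.single u 1 - Pi.single w 1)) ⬝ᵥ
      G.adjMatrix ℝ *ᵥ (z + c • (Pi.single u 1 - Pi.single w 1)) := by
  set d : V → ℝ := Pi.single u 1 - Pi.single w 1
  have hsymm : z ⬝ᵥ G.adjMatrix ℝ *ᵥ d = d ⬝ᵥ G.adjMatrix ℝ *ᵥ z := by
    rw [dotProduct_comm, dotProduct_mulVec, ← vecMul_transpose, transpose_adjMatrix]
  have hdz : d ⬝ᵥ G.adjMatrix ℝ *ᵥ z = (G.adjMatrix ℝ *ᵥ z) u - (G.adjMatrix ℝ *ᵥ z) w := by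
    simp [d, sub_dotProduct]
  have hadj' : ¬ G.Adj w u := fun h => hadj h.symm
  have hdd : d ⬝ᵥ G.adjMatrix ℝ *ᵥ d = 0 := by
    simp [d, sub_dotProduct, mulVec_sub, hadj, hadj']
  simp only [mulVec_add, mulVec_smul, dotProduct_add, add_dotProduct, dotProduct_smul,
    smul_dotProduct, smul_eq_mul, hsymm, hdz, hdd]
  nlinarith

theorem dotProduct_adjMatrix_mulVec_le_maxDensity {z : V → ℝ} (hz : 0 ≤ z) :
    z ⬝ᵥ G.adjMatrix ℝ *ᵥ z ≤ maxDensity G * (∑ u, z u) ^ 2 := by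
  induction hN : (Function.support z).ncard using Nat.strong_induction_on generalizing z with
  | _ N ih =>
    by_cases hclique : G.IsClique (Function.support z)
    · exact dotProduct_adjMatrix_mulVec_le_maxDensity_of_isClique G hz hclique
    obtain ⟨u, hu, w, hw, huw, hadj⟩ :
        ∃ u ∈ Function.support z, ∃ w ∈ Function.support z, u ≠ w ∧ ¬ G.Adj u w := by
      simpa [SimpleGraph.IsClique, Set.Pairwise] using hclique
    -- Orient the non-edge so that moving the weight of `w` onto `u` does not decrease the form;
    -- the move also shrinks the support.
    wlog hdir : (G.adjMatrix ℝ *ᵥ z) w ≤ (G.adjMatrix ℝ *ᵥ z) u generalizing u w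
    · exact this w hw u hu huw.symm (fun h => hadj h.symm) (le_of_not_ge hdir)
    set z' := z + z w • (Pi.single u 1 - Pi.single w 1)
    have hz'w : z' w = 0 := by simp [z', huw.symm]
    have hz'u : z' u = z u + z w := by simp [z', huw]
    have hz'v : ∀ v, v ≠ u → v ≠ w → z' v = z v := fun v hvu hvw => by simp [z', hvu, hvw]
    have hz' : 0 ≤ z' := fun v => by
      by_cases hvu : v = u
      · subst hvu; rw [hz'u]; exact add_nonneg (hz v) (hz w)
      by_cases hvw : v = w
      · simp [hvw, hz'w]
      · rw [hz'v v hvu hvw]; exact hz v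
    have hsum : ∑ v, z' v = ∑ v, z v := by
      simp [z', Finset.sum_add_distrib, ← Finset.mul_sum, Finset.sum_sub_distrib]
    have hsupp : Function.support z' ⊂ Function.support z := by
      refine Set.ssubset_iff_subset_ne.mpr ⟨fun v hv => ?_, fun h => ?_⟩
      · by_cases hvu : v = u
        · rwa [hvu]
        by_cases hvw : v = w
        · simp [hvw, hz'w] at hv
        · simpa [hz'v v hvu hvw] using hv
      · exact (h ▸ hw : w ∈ Function.support z') hz'w
    calc z ⬝ᵥ G.adjMatrix ℝ *ᵥ z ≤ z' ⬝ᵥ G.adjMatrix ℝ *ᵥ z' :=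
          dotProduct_adjMatrix_mulVec_le_of_not_adj G z hadj hdir (hz w)
      _ ≤ maxDensity G * (∑ v, z' v) ^ 2 :=
          ih _ (hN ▸ Set.ncard_lt_ncard hsupp (Set.toFinite _)) hz' rfl
      _ = maxDensity G * (∑ v, z v) ^ 2 := by rw [hsum]

end MotzkinStraus

section Laplacian

variable [Fintype V] [DecidableEq V] (G : SimpleGraph V)

theorem lapEig_le_card (i : V) : lapEig G i ≤ Fintype.card V := by
  classical
  rw [lapEig_eq_eigenvalues]
  exact (lapMatrix_isHermitian G).eigenvalues_le_of_dotProduct_le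
    (dotProduct_lapMatrix_mulVec_le G) i

theorem sum_lapEig_le_mul_card (T : Finset V) : ∑ i ∈ T, lapEig G i ≤ #T * Fintype.card V :=
  (Finset.sum_le_sum fun i _ => lapEig_le_card G i).trans_eq (by simp)

theorem sum_lapEig_le (T : Finset V) :
    ∑ i ∈ T, lapEig G i ≤
      numEdges G + maxDensity G * #T ^ 2 / 2 + √(2 * numEdges G * #T) := by
  classical
  obtain ⟨U, hU, heig⟩ : ∃ U ∈ orthogonalGroup V ℝ,
      ∀ i, lapEig G i = Uᵀ i ⬝ᵥ G.lapMatrix ℝ *ᵥ Uᵀ i :=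
    ⟨_, (lapMatrix_isHermitian G).eigenvectorUnitary_mem_orthogonalGroup, fun i => by
      rw [lapEig_eq_eigenvalues, (lapMatrix_isHermitian G).eigenvalues_eq_dotProduct]⟩
  set z : V → ℝ := fun u => ∑ i ∈ T, U u i ^ 2
  have hz0 : 0 ≤ z := fun u => Finset.sum_nonneg fun _ _ => sq_nonneg _
  have hz1 : z ≤ 1 := fun u =>
    (Finset.sum_le_sum_of_subset_of_nonneg (subset_univ T) fun _ _ _ => sq_nonneg _).trans_eq
      (sum_sq_row_eq_one hU u)
  have hzsum : ∑ u, z u = #T := by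
    rw [Finset.sum_comm]; simp [sum_sq_col_eq_one hU]
  have hsplit : ∑ i ∈ T, lapEig G i =
      ∑ u, G.degree u * z u - ∑ i ∈ T, Uᵀ i ⬝ᵥ G.adjMatrix ℝ *ᵥ Uᵀ i := by
    simp only [heig, lapMatrix, sub_mulVec, dotProduct_sub, dotProduct_mulVec_degMatrix,
      Finset.sum_sub_distrib]
    congr 1
    rw [Finset.sum_comm]
    simp [z, Finset.mul_sum, sq, mul_assoc]
  have hdeg := sum_degree_mul_le G hz1
  have hms := dotProduct_adjMatrix_mulVec_le_maxDensity G hz0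
  have hfrob := abs_sum_dotProduct_mulVec_le (G.adjMatrix ℝ) hU T
  rw [hzsum] at hms
  rw [sum_sum_adjMatrix_sq_eq_two_mul_numEdges, mul_comm] at hfrob
  rw [hsplit]
  linarith [neg_abs_le (∑ i ∈ T, Uᵀ i ⬝ᵥ G.adjMatrix ℝ *ᵥ Uᵀ i)]

end Laplacian

section Main

variable [Fintype V] [DecidableEq V] (G : SimpleGraph V)

theorem sLap_le_mul_card (k : ℕ) : sLap G k ≤ k * Fintype.card V :=
  sumKLargest_le (by positivity) fun T hT => hT ▸ sum_lapEig_le_mul_card G T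

theorem numEdges_lt_mul_card_of_not_bc {k : ℕ} (h : ¬ BC G k) :
    (numEdges G : ℝ) < k * Fintype.card V := by
  rw [BC, not_le] at h
  linarith [sLap_le_mul_card G k, (Nat.cast_nonneg ((k + 1).choose 2) : (0 : ℝ) ≤ _)]

theorem bc_of_sqrt_le_mul {k : ℕ} (h : √(8 * Fintype.card V) ≤ k * (1 - maxDensity G)) :
    BC G k := by
  have hchoose : (((k + 1).choose 2 : ℕ) : ℝ) = (k + 1) * k / 2 := by
    rw [Nat.cast_choose_two]; push_cast; ring
  refine sumKLargest_le (by positivity) fun T hT => ?_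
  rw [hchoose]
  rcases le_or_gt ((k : ℝ) * Fintype.card V) (numEdges G) with hm | hm
  · have := sum_lapEig_le_mul_card G T
    rw [hT] at this
    nlinarith [(Nat.cast_nonneg k : (0 : ℝ) ≤ k)]
  have h8 : 8 * (Fintype.card V : ℝ) ≤ (k * (1 - maxDensity G)) ^ 2 := by
    have := pow_le_pow_left₀ (Real.sqrt_nonneg _) h 2
    rwa [Real.sq_sqrt (by positivity)] at this
  have hroot : √(2 * numEdges G * k) ≤ (1 - maxDensity G) * k ^ 2 / 2 := by
    refine Real.sqrt_le_iff.mpr ⟨?_, ?_⟩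
    · have := (Real.sqrt_nonneg _).trans h
      nlinarith [(Nat.cast_nonneg k : (0 : ℝ) ≤ k)]
    · nlinarith [(Nat.cast_nonneg k : (0 : ℝ) ≤ k)]
  have := sum_lapEig_le G T
  rw [hT] at this
  nlinarith [(Nat.cast_nonneg k : (0 : ℝ) ≤ k)]

end Main

theorem bc_of_sqrt_eight_n_general {V : Type*} [Fintype V] [DecidableEq V] (G : SimpleGraph V)
    (k : ℕ) :
    (Real.sqrt (8 * Fintype.card V) / (1 - maxDensity G) ≤ (k : ℝ) → BC G k) ∧
    (¬ BC G k → (numEdges G : ℝ) / (Fintype.card V : ℝ) < (k : ℝ) ∧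
      (k : ℝ) < Real.sqrt (8 * Fintype.card V) / (1 - maxDensity G)) := by
  have hdens : 0 < 1 - maxDensity G := sub_pos.mpr (maxDensity_lt_one G)
  have hBC : Real.sqrt (8 * Fintype.card V) / (1 - maxDensity G) ≤ k → BC G k :=
    fun h => bc_of_sqrt_le_mul G ((div_le_iff₀ hdens).mp h)
  refine ⟨hBC, fun hfail => ⟨?_, lt_of_not_ge (mt hBC hfail)⟩⟩
  have hm := numEdges_lt_mul_card_of_not_bc G hfail
  have hcard : (0 : ℝ) < Fintype.card V := by
    by_contra hle
    nlinarith [(Nat.cast_nonneg (numEdges G) : (0 : ℝ) ≤ _), (Nat.cast_nonneg k : (0 : ℝ) ≤ k)]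
  rwa [div_lt_iff₀ hcard]

/-- `BC_k(G)` holds if `k ≥ √(8n)/(1-t)`; equivalently, any `k` at which
`BC_k(G)` fails satisfies `m/n < k < √(8n)/(1-t)`. -/
theorem bc_of_sqrt_eight_n {V : Type*} [Fintype V] [DecidableEq V] (G : SimpleGraph V)
    (k : ℕ) (hk1 : 1 ≤ k) (hk2 : k ≤ Fintype.card V) :
    (Real.sqrt (8 * Fintype.card V) / (1 - maxDensity G) ≤ (k : ℝ) → BC G k) ∧
    (¬ BC G k → (numEdges G : ℝ) / (Fintype.card V : ℝ) < (k : ℝ) ∧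
      (k : ℝ) < Real.sqrt (8 * Fintype.card V) / (1 - maxDensity G)) :=
  bc_of_sqrt_eight_n_general G k

end Brouwer
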